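/- Noether-type conservation law on time scales: Let T be a bounded time scale with σ ∇-differentiable on T_κ. Let L : ℝⁿ × ℝⁿ × T^κ → ℝ be continuous and C¹ in its first two variables, and let Φ : [−η, η] × ℝⁿ → ℝⁿ be C² with Φ(0,·) = id. Suppose u ∈ C¹Δ_rd(T) satisfies the differential Euler-Lagrange equation [∂L/∂v(u, u^Δ, ·)]^∇(t) = σ^∇(t) ∂L/∂x(u(t), u^Δ(t), t) for all t ∈ T^κ_κ, and suppose the map θ ↦ L(Φ(θ, u(t)), (Φ(θ, u(·)))^Δ(t), t) is constant in θ for every t ∈ T^κ_κ (invariance), with θ ↦ Φ(θ, u(·)) jointly regular enough that Δ-differentiation in t and differentiation in θ commute. Then there exists c ∈ ℝ such that ∂L/∂v(u(t), u^Δ(t), t) · ∂Φ/∂θ(0, u(σ(t))) = c for every t ∈ T^κ. -/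

import Mathlib

open Set Filter Topology RealInnerProductSpace

open Classical in
/-- Forward jump operator of a time scale `T`, with convention `inf ∅ = sSup T`. -/
noncomputable def tsSigma (T : Set ℝ) (t : ℝ) : ℝ :=
  if ({s | s ∈ T ∧ t < s}).Nonempty then sInf {s | s ∈ T ∧ t < s} else sSup T

open Classical in
/-- Backward jump operator of a time scale `T`, with convention `sup ∅ = sInf T`. -/
noncomputable def tsRho (T : Set ℝ) (t : ℝ) : ℝ :=
  if ({s | s ∈ T ∧ s < t}).Nonempty then sSup {s | s ∈ T ∧ s < t} else sInf T

/-- `u` is Δ-differentiable at `t` (w.r.t. the time scale `T`) with derivative `L`. -/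
def HasDeltaDerivAt {E : Type*} [NormedAddCommGroup E] [NormedSpace ℝ E]
    (T : Set ℝ) (u : ℝ → E) (t : ℝ) (L : E) : Prop :=
  Filter.Tendsto (fun s => (tsSigma T t - s)⁻¹ • (u (tsSigma T t) - u s))
    (nhdsWithin t (T \ {tsSigma T t})) (nhds L)

/-- `u` is ∇-differentiable at `t` (w.r.t. the time scale `T`) with derivative `L`. -/
def HasNablaDerivAt {E : Type*} [NormedAddCommGroup E] [NormedSpace ℝ E]
    (T : Set ℝ) (u : ℝ → E) (t : ℝ) (L : E) : Prop :=
  Filter.Tendsto (fun s => (s - tsRho T t)⁻¹ • (u s - u (tsRho T t)))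
    (nhdsWithin t (T \ {tsRho T t})) (nhds L)

/-- `T^κ = {t ∈ T : t ≤ ρ(max T)}`. -/
def Tup (T : Set ℝ) : Set ℝ := {t | t ∈ T ∧ t ≤ tsRho T (sSup T)}

/-- `T_κ = {t ∈ T : σ(min T) ≤ t}`. -/
def Tlow (T : Set ℝ) : Set ℝ := {t | t ∈ T ∧ tsSigma T (sInf T) ≤ t}


/-!
Write `ξ = ∂Φ/∂θ(0, u(·))` and `p = ∂L/∂v(u, u^Δ, ·)`. Differentiating the invariance identity at
`θ = 0` gives `⟪∂L/∂x, ξ⟫ + ⟪p, ξ^Δ⟫ = 0` along `u`. By the time-scale Leibniz rule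
`⟪p, ξ ∘ σ⟫^∇ = ⟪p^∇, ξ⟫ + σ^∇ ⟪p, ξ^Δ⟫`, and the Euler–Lagrange equation `p^∇ = σ^∇ ∂L/∂x`, this
∇-derivative is `σ^∇` times the left-hand side above, hence zero on `T^κ_κ`; a function with
vanishing ∇-derivative is constant.
-/

section JumpOperators

variable {T : Set ℝ} {t s : ℝ}

lemma tsSigma_mem (hne : T.Nonempty) (hbd : Bornology.IsBounded T) (hcl : IsClosed T) (t : ℝ) :
    tsSigma T t ∈ T := by
  unfold tsSigma
  split_ifs with h
  · exact closure_minimal (fun _ hx => hx.1) hcl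
      (csInf_mem_closure h (hbd.bddBelow.mono fun _ hx => hx.1))
  · exact hcl.csSup_mem hne hbd.bddAbove

lemma tsRho_mem (hne : T.Nonempty) (hbd : Bornology.IsBounded T) (hcl : IsClosed T) (t : ℝ) :
    tsRho T t ∈ T := by
  unfold tsRho
  split_ifs with h
  · exact closure_minimal (fun _ hx => hx.1) hcl
      (csSup_mem_closure h (hbd.bddAbove.mono fun _ hx => hx.1))
  · exact hcl.csInf_mem hne hbd.bddBelow

lemma tsSigma_mem_closure (hbd : Bornology.IsBounded T) (h : {s | s ∈ T ∧ t < s}.Nonempty) :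
    tsSigma T t ∈ closure {s | s ∈ T ∧ t < s} := by
  rw [tsSigma, if_pos h]
  exact csInf_mem_closure h (hbd.bddBelow.mono fun _ hx => hx.1)

lemma tsRho_mem_closure (hbd : Bornology.IsBounded T) (h : {s | s ∈ T ∧ s < t}.Nonempty) :
    tsRho T t ∈ closure {s | s ∈ T ∧ s < t} := by
  rw [tsRho, if_pos h]
  exact csSup_mem_closure h (hbd.bddAbove.mono fun _ hx => hx.1)

lemma le_tsSigma (hbd : Bornology.IsBounded T) (ht : t ∈ T) : t ≤ tsSigma T t := by
  unfold tsSigma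
  split_ifs with h
  · exact le_csInf h fun _ hb => hb.2.le
  · exact le_csSup hbd.bddAbove ht

lemma tsRho_le (hbd : Bornology.IsBounded T) (ht : t ∈ T) : tsRho T t ≤ t := by
  unfold tsRho
  split_ifs with h
  · exact csSup_le h fun _ hb => hb.2.le
  · exact csInf_le hbd.bddBelow ht

lemma tsSigma_le (hbd : Bornology.IsBounded T) (hs : s ∈ T) (hts : t < s) : tsSigma T t ≤ s := by
  rw [tsSigma, if_pos ⟨s, hs, hts⟩]
  exact csInf_le (hbd.bddBelow.mono fun _ hx => hx.1) ⟨hs, hts⟩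

lemma le_tsRho (hbd : Bornology.IsBounded T) (hs : s ∈ T) (hst : s < t) : s ≤ tsRho T t := by
  rw [tsRho, if_pos ⟨s, hs, hst⟩]
  exact le_csSup (hbd.bddAbove.mono fun _ hx => hx.1) ⟨hs, hst⟩

lemma tsSigma_tsRho_of_lt (hbd : Bornology.IsBounded T) (ht : t ∈ T) (h : tsRho T t < t) :
    tsSigma T (tsRho T t) = t := by
  refine le_antisymm (tsSigma_le hbd ht h) ?_
  rw [tsSigma, if_pos ⟨t, ht, h⟩]
  refine le_csInf ⟨t, ht, h⟩ fun s ⟨hs, hρs⟩ => ?_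
  by_contra! hst
  exact hρs.not_ge (le_tsRho hbd hs hst)

lemma eq_of_mem_Ioo_tsRho_tsSigma (hbd : Bornology.IsBounded T) (hs : s ∈ T)
    (h : s ∈ Ioo (tsRho T t) (tsSigma T t)) : s = t := by
  rcases lt_trichotomy s t with hst | rfl | hts
  · exact absurd (le_tsRho hbd hs hst) h.1.not_ge
  · rfl
  · exact absurd (tsSigma_le hbd hs hts) h.2.not_ge

end JumpOperators

section Derivatives

variable {E : Type*} [NormedAddCommGroup E] [NormedSpace ℝ E] {T : Set ℝ} {f : ℝ → E} {t : ℝ}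
  {D : E}

lemma HasNablaDerivAt.sub_tsRho_eq (h : HasNablaDerivAt T f t D) (ht : t ∈ T)
    (hρ : tsRho T t ≠ t) : f t - f (tsRho T t) = (t - tsRho T t) • D := by
  have hmem : t ∈ T \ {tsRho T t} := ⟨ht, Ne.symm hρ⟩
  rw [← tendsto_nhds_unique (tendsto_pure_nhds _ t) (h.mono_left (pure_le_nhdsWithin hmem)),
    smul_smul, mul_inv_cancel₀ (sub_ne_zero.2 (Ne.symm hρ)), one_smul]

lemma HasDeltaDerivAt.tsSigma_sub_eq (h : HasDeltaDerivAt T f t D) (ht : t ∈ T)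
    (hσ : tsSigma T t ≠ t) : f (tsSigma T t) - f t = (tsSigma T t - t) • D := by
  have hmem : t ∈ T \ {tsSigma T t} := ⟨ht, Ne.symm hσ⟩
  rw [← tendsto_nhds_unique (tendsto_pure_nhds _ t) (h.mono_left (pure_le_nhdsWithin hmem)),
    smul_smul, mul_inv_cancel₀ (sub_ne_zero.2 hσ), one_smul]

lemma HasNablaDerivAt.tendsto (h : HasNablaDerivAt T f t D) (ht : t ∈ T) :
    Tendsto f (𝓝[T \ {tsRho T t}] t) (𝓝 (f t)) := by
  set r := tsRho T t
  have hlim : Tendsto (fun s => f r + (s - r) • ((s - r)⁻¹ • (f s - f r)))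
      (𝓝[T \ {r}] t) (𝓝 (f r + (t - r) • D)) :=
    tendsto_const_nhds.add <|
      ((continuous_id.sub continuous_const).tendsto t).mono_left nhdsWithin_le_nhds |>.smul h
  have hval : f r + (t - r) • D = f t := by
    rcases eq_or_ne r t with hrt | hrt
    · simp [hrt]
    · rw [← h.sub_tsRho_eq ht hrt]; abel
  rw [← hval]
  refine hlim.congr' (eventually_nhdsWithin_of_forall fun s hs => ?_)
  rw [smul_smul, mul_inv_cancel₀ (sub_ne_zero.2 hs.2), one_smul, add_sub_cancel]

lemma hasDeltaDerivAt_iff_hasDerivWithinAt (hσ : tsSigma T t = t) :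
    HasDeltaDerivAt T f t D ↔ HasDerivWithinAt f D T t := by
  rw [hasDerivWithinAt_iff_tendsto_slope, HasDeltaDerivAt, hσ]
  refine tendsto_congr fun s => ?_
  rw [slope_comm, slope_def_module]

end Derivatives

section Neighbourhoods

variable {T : Set ℝ} {t : ℝ}

lemma nhdsWithin_diff_tsRho_le_pure (hbd : Bornology.IsBounded T) (hρ : tsRho T t < t)
    (hσ : t < tsSigma T t) : 𝓝[T \ {tsRho T t}] t ≤ pure t := by
  rw [le_pure_iff]
  filter_upwards [nhdsWithin_le_nhds (Ioo_mem_nhds hρ hσ), self_mem_nhdsWithin] with s hs hsT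
  exact eq_of_mem_Ioo_tsRho_tsSigma hbd hsT.1 hs

lemma neBot_nhdsWithin_diff_tsSigma (hbd : Bornology.IsBounded T) (hab : sInf T < sSup T)
    (ht : t ∈ Tup T) : (𝓝[T \ {tsSigma T t}] t).NeBot := by
  rw [← mem_closure_iff_nhdsWithin_neBot]
  by_cases hσ : tsSigma T t = t
  swap
  · exact subset_closure ⟨ht.1, Ne.symm hσ⟩
  by_cases hright : {s | s ∈ T ∧ t < s}.Nonempty
  · have := tsSigma_mem_closure hbd hright
    rw [hσ] at this ⊢
    exact closure_mono (fun s hs => mem_sdiff_singleton.2 ⟨hs.1, hs.2.ne'⟩) this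
  -- `t = max T`, which lies in `T^κ` only if it is left-dense
  have htop : sSup T = t := by rw [← hσ, tsSigma, if_neg hright]
  have hρ : tsRho T t = t := le_antisymm (tsRho_le hbd ht.1) (htop ▸ ht.2)
  have hleft : {s | s ∈ T ∧ s < t}.Nonempty := by
    obtain ⟨s, hs, hst⟩ := exists_lt_of_csInf_lt ⟨t, ht.1⟩ (htop ▸ hab)
    exact ⟨s, hs, hst⟩
  have := tsRho_mem_closure hbd hleft
  rw [hρ] at this
  rw [hσ]
  exact closure_mono (fun s hs => mem_sdiff_singleton.2 ⟨hs.1, hs.2.ne⟩) this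

/-- A point where `σ` is ∇-differentiable cannot be left-dense and right-scattered, since `σ`
jumps there. -/
lemma tsSigma_tsRho_of_hasNablaDerivAt (hbd : Bornology.IsBounded T) {sd : ℝ}
    (h : HasNablaDerivAt T (tsSigma T) t sd) [(𝓝[T \ {tsRho T t}] t).NeBot] (ht : t ∈ T) :
    tsSigma T (tsRho T t) = t := by
  rcases (tsRho_le hbd ht).lt_or_eq with hρ | hρ
  · exact tsSigma_tsRho_of_lt hbd ht hρ
  rw [hρ]
  refine le_antisymm ?_ (le_tsSigma hbd ht)
  by_contra! hσ
  have hle : ∀ᶠ s in 𝓝[T \ {tsRho T t}] t, tsSigma T s ≤ t := by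
    filter_upwards [nhdsWithin_le_nhds (Iio_mem_nhds hσ), self_mem_nhdsWithin]
      with s hsσ ⟨hs, hst⟩
    rw [hρ, mem_singleton_iff] at hst
    rcases lt_or_gt_of_ne hst with hst | hts
    · exact tsSigma_le hbd ht hst
    · exact absurd (tsSigma_le hbd hs hts) (not_le.2 hsσ)
  exact hσ.not_ge (le_of_tendsto (h.tendsto ht) hle)

end Neighbourhoods

section Leibniz

variable {E : Type*} [NormedAddCommGroup E] [InnerProductSpace ℝ E] {T : Set ℝ} {t sd : ℝ}

lemma HasNablaDerivAt.inner {v W : ℝ → E} {v' W' : E} (hv : HasNablaDerivAt T v t v')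
    (hW : HasNablaDerivAt T W t W') (ht : t ∈ T) :
    HasNablaDerivAt T (fun s => ⟪v s, W s⟫) t (⟪v', W (tsRho T t)⟫ + ⟪v t, W'⟫) := by
  have hvt := hv.tendsto ht
  unfold HasNablaDerivAt at *
  refine ((hv.inner tendsto_const_nhds).add (hvt.inner hW)).congr fun s => ?_
  simp only [real_inner_smul_left, real_inner_smul_right, inner_sub_left, inner_sub_right,
    smul_eq_mul]
  ring

lemma HasDeltaDerivAt.hasNablaDerivAt_comp_tsSigma (hne : T.Nonempty)
    (hbd : Bornology.IsBounded T) (hcl : IsClosed T) {w : ℝ → E} {w' : E}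
    (hw : HasDeltaDerivAt T w t w') (hσ : HasNablaDerivAt T (tsSigma T) t sd) (ht : t ∈ T)
    (hρ : tsSigma T (tsRho T t) = t) :
    HasNablaDerivAt T (fun s => w (tsSigma T s)) t (sd • w') := by
  rcases (le_tsSigma hbd ht).eq_or_lt with hσt | hσt
  · have hq : Tendsto (fun s => (s - tsRho T t)⁻¹ • (tsSigma T s - t))
        (𝓝[T \ {tsRho T t}] t) (𝓝 sd) := by
      simpa only [HasNablaDerivAt, hρ] using hσ
    have hσT : Tendsto (tsSigma T) (𝓝[T \ {tsRho T t}] t) (𝓝[T] t) := by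
      refine tendsto_nhdsWithin_iff.2 ⟨?_, .of_forall (tsSigma_mem hne hbd hcl)⟩
      simpa only [← hσt] using hσ.tendsto ht
    -- the slope of `w` at `t`, continuously extended by `w'`
    have hφ : Tendsto (Function.update (slope w t) t w') (𝓝[T] t) (𝓝 w') := by
      simpa using (continuousWithinAt_update_same.2 <| hasDerivWithinAt_iff_tendsto_slope.1 <|
        (hasDeltaDerivAt_iff_hasDerivWithinAt hσt.symm).1 hw).tendsto
    refine (hq.smul (hφ.comp hσT)).congr fun s => ?_
    simp only [Function.comp_apply, hρ]
    by_cases hs : tsSigma T s = t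
    · simp [hs]
    · rw [Function.update_of_ne hs, smul_assoc, sub_smul_slope, vsub_eq_sub]
  · -- `t` is isolated in `T`
    have hρt : tsRho T t < t :=
      (tsRho_le hbd ht).lt_of_ne fun h => hσt.ne' (by rwa [h] at hρ)
    have hval : (t - tsRho T t)⁻¹ • (w (tsSigma T t) - w (tsSigma T (tsRho T t))) = sd • w' := by
      have hjump := hσ.sub_tsRho_eq ht hρt.ne
      rw [hρ] at hjump
      rw [hρ, hw.tsSigma_sub_eq ht hσt.ne', hjump, smul_eq_mul, ← smul_smul, ← mul_smul,
        inv_mul_cancel₀ (sub_ne_zero.2 hρt.ne'), one_smul]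
    rw [HasNablaDerivAt, ← hval]
    exact (tendsto_pure_nhds _ t).mono_left (nhdsWithin_diff_tsRho_le_pure hbd hρt hσt)

theorem hasNablaDerivAt_inner_comp_tsSigma (hne : T.Nonempty) (hbd : Bornology.IsBounded T)
    (hcl : IsClosed T) {v w : ℝ → E} {v' w' : E} (hv : HasNablaDerivAt T v t v')
    (hw : HasDeltaDerivAt T w t w') (hσ : HasNablaDerivAt T (tsSigma T) t sd) (ht : t ∈ T) :
    HasNablaDerivAt T (fun s => ⟪v s, w (tsSigma T s)⟫) t (⟪v', w t⟫ + sd * ⟪v t, w'⟫) := by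
  rcases (𝓝[T \ {tsRho T t}] t).eq_or_neBot with hbot | hF
  · simp [HasNablaDerivAt, hbot]
  have hρ := tsSigma_tsRho_of_hasNablaDerivAt hbd hσ ht
  simpa only [hρ, real_inner_smul_right] using
    hv.inner (hw.hasNablaDerivAt_comp_tsSigma hne hbd hcl hσ ht hρ) ht

end Leibniz

section Constancy

variable {T : Set ℝ} {f : ℝ → ℝ}

lemma exists_lt_abs_sub_le_of_hasNablaDerivAt_zero (hne : T.Nonempty)
    (hbd : Bornology.IsBounded T) (hcl : IsClosed T) {m ε : ℝ} (hm : m ∈ T)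
    (hlt : {s | s ∈ T ∧ s < m}.Nonempty) (hf : HasNablaDerivAt T f m 0) (hε : 0 < ε) :
    ∃ s ∈ T, s < m ∧ |f m - f s| ≤ ε * (m - s) := by
  rcases (tsRho_le hbd hm).lt_or_eq with hρ | hρ
  · refine ⟨tsRho T m, tsRho_mem hne hbd hcl m, hρ, ?_⟩
    rw [hf.sub_tsRho_eq hm hρ.ne, smul_zero, abs_zero]
    exact mul_nonneg hε.le (sub_nonneg.2 hρ.le)
  have := mem_closure_iff_nhdsWithin_neBot.1 (hρ ▸ tsRho_mem_closure hbd hlt)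
  have hq : Tendsto (fun s => (s - m)⁻¹ * (f s - f m)) (𝓝[{s | s ∈ T ∧ s < m}] m) (𝓝 0) := by
    refine Tendsto.mono_left ?_ <|
      nhdsWithin_mono _ fun s hs => mem_sdiff_singleton.2 ⟨hs.1, hs.2.ne⟩
    simpa only [HasNablaDerivAt, hρ, smul_eq_mul] using hf
  have hsmall : ∀ᶠ s in 𝓝[{s | s ∈ T ∧ s < m}] m, |(s - m)⁻¹ * (f s - f m)| < ε := by
    simpa using hq.abs.eventually (gt_mem_nhds (by simpa using hε))
  obtain ⟨s, hs, hsT, hsm⟩ := (hsmall.and self_mem_nhdsWithin).exists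
  refine ⟨s, hsT, hsm, ?_⟩
  have hms : 0 < m - s := sub_pos.2 hsm
  calc |f m - f s| = |(s - m)⁻¹ * (f s - f m)| * (m - s) := by
        rw [abs_mul, abs_inv, abs_sub_comm s m, abs_of_pos hms, abs_sub_comm]
        field_simp
    _ ≤ ε * (m - s) := by gcongr

/-- The infimum of the points `s ≤ y` at which the estimate holds is attained, and it cannot
exceed `min T`, because the estimate propagates one step to the left of any `m > min T`. -/
lemma abs_sub_le_of_hasNablaDerivAt_zero (hne : T.Nonempty) (hbd : Bornology.IsBounded T)
    (hcl : IsClosed T) {y ε : ℝ} (hy : y ∈ T) (hε : 0 < ε)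
    (hf : ∀ t ∈ T, tsSigma T (sInf T) ≤ t → t ≤ y → HasNablaDerivAt T f t 0) :
    |f y - f (sInf T)| ≤ ε * (y - sInf T) := by
  set S := {s | s ∈ T ∧ s ≤ y ∧ |f y - f s| ≤ ε * (y - s)}
  have hyS : y ∈ S := ⟨hy, le_rfl, by simp⟩
  have hSbdd : BddBelow S := hbd.bddBelow.mono fun s hs => hs.1
  set m := sInf S
  have hmT : m ∈ T := closure_minimal (fun s hs => hs.1) hcl (csInf_mem_closure ⟨y, hyS⟩ hSbdd)
  have hmy : m ≤ y := csInf_le hSbdd hyS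
  have hmS : m ∈ S := by
    by_contra hmS
    have hgt : ∀ s ∈ S, m < s := fun s hs =>
      (csInf_le hSbdd hs).lt_of_ne (ne_of_mem_of_not_mem hs hmS).symm
    have hσa : tsSigma T (sInf T) ≤ m := le_csInf ⟨y, hyS⟩ fun s hs =>
      tsSigma_le hbd hs.1 ((csInf_le hbd.bddBelow hmT).trans_lt (hgt s hs))
    have := mem_closure_iff_nhdsWithin_neBot.1 (csInf_mem_closure ⟨y, hyS⟩ hSbdd)
    have hfm : Tendsto f (𝓝[S] m) (𝓝 (f m)) :=
      ((hf m hmT hσa hmy).tendsto hmT).mono_left <| nhdsWithin_mono _ fun s hs =>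
        ⟨hs.1, ((tsRho_le hbd hmT).trans_lt (hgt s hs)).ne'⟩
    refine hmS ⟨hmT, hmy, le_of_tendsto_of_tendsto (tendsto_const_nhds.sub hfm).abs
      ((by fun_prop : Continuous fun s : ℝ => ε * (y - s)).continuousWithinAt)
      (eventually_nhdsWithin_of_forall fun s hs => hs.2.2)⟩
  rcases (csInf_le hbd.bddBelow hmT).eq_or_lt with ham | ham
  · simpa only [ham] using hmS.2.2
  obtain ⟨s, hsT, hsm, hs⟩ := exists_lt_abs_sub_le_of_hasNablaDerivAt_zero hne hbd hcl hmT
    ⟨_, hcl.csInf_mem hne hbd.bddBelow, ham⟩ (hf m hmT (tsSigma_le hbd hmT ham) hmy) hε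
  have hsS : s ∈ S := ⟨hsT, hsm.le.trans hmy, calc
    |f y - f s| ≤ |f y - f m| + |f m - f s| := abs_sub_le _ _ _
    _ ≤ ε * (y - m) + ε * (m - s) := add_le_add hmS.2.2 hs
    _ = ε * (y - s) := by ring⟩
  exact absurd (csInf_le hSbdd hsS) hsm.not_ge

theorem eq_of_hasNablaDerivAt_zero (hne : T.Nonempty) (hbd : Bornology.IsBounded T)
    (hcl : IsClosed T) {y : ℝ} (hy : y ∈ T)
    (hf : ∀ t ∈ T, tsSigma T (sInf T) ≤ t → t ≤ y → HasNablaDerivAt T f t 0) :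
    f y = f (sInf T) := by
  have hlim : Tendsto (fun ε : ℝ => ε * (y - sInf T)) (𝓝[>] 0) (𝓝 0) := by
    refine tendsto_nhdsWithin_of_tendsto_nhds ?_
    simpa using (tendsto_id (x := 𝓝 (0 : ℝ))).mul_const (y - sInf T)
  have := ge_of_tendsto hlim (eventually_nhdsWithin_of_forall fun ε (hε : 0 < ε) =>
    abs_sub_le_of_hasNablaDerivAt_zero hne hbd hcl hy hε hf)
  exact sub_eq_zero.1 (abs_nonpos_iff.1 this)

end Constancy

lemma inner_gradient_add_inner_gradient_eq_zero {E F : Type*} [NormedAddCommGroup E]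
    [InnerProductSpace ℝ E] [CompleteSpace E] [NormedAddCommGroup F] [InnerProductSpace ℝ F]
    [CompleteSpace F] {L : E → F → ℝ} {x gx γ' : E} {v gv δ' : F} {γ : ℝ → E} {δ : ℝ → F}
    {θ₀ c : ℝ} (hL : DifferentiableAt ℝ (fun p : E × F => L p.1 p.2) (x, v))
    (hLx : HasGradientAt (fun y => L y v) gx x) (hLv : HasGradientAt (fun w => L x w) gv v)
    (hγ : HasDerivAt γ γ' θ₀) (hδ : HasDerivAt δ δ' θ₀) (hγ₀ : γ θ₀ = x) (hδ₀ : δ θ₀ = v)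
    (hinv : ∀ᶠ θ in 𝓝 θ₀, L (γ θ) (δ θ) = c) :
    ⟪gx, γ'⟫ + ⟪gv, δ'⟫ = 0 := by
  set L' := fderiv ℝ (fun p : E × F => L p.1 p.2) (x, v)
  have hL' := hL.hasFDerivAt
  have hcomp : HasDerivAt (fun θ => L (γ θ) (δ θ)) (L' (γ', δ')) θ₀ :=
    hL'.comp_hasDerivAt_of_eq θ₀ (hγ.prodMk hδ) (by rw [hγ₀, hδ₀])
  have hx := hLx.hasFDerivAt.unique <|
    HasFDerivAt.comp (f := fun y => (y, v)) x hL' (hasFDerivAt_prodMk_left x v)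
  have hv := hLv.hasFDerivAt.unique <|
    HasFDerivAt.comp (f := fun w => (x, w)) v hL' (hasFDerivAt_prodMk_right x v)
  rw [← hcomp.unique ((hasDerivAt_const θ₀ c).congr_of_eventuallyEq hinv),
    ← L'.comp_inl_add_comp_inr (γ', δ'), ← hx, ← hv]
  simp

theorem stmt_18_general (T : Set ℝ) (hne : T.Nonempty) (hbd : Bornology.IsBounded T) (hcl : IsClosed T)
    (hcard : ∃ x ∈ T, ∃ y ∈ T, ∃ z ∈ T, x ≠ y ∧ x ≠ z ∧ y ≠ z)
    (n : ℕ)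
    (L : EuclideanSpace ℝ (Fin n) → EuclideanSpace ℝ (Fin n) → ℝ → ℝ)
    (Lx Lv : EuclideanSpace ℝ (Fin n) → EuclideanSpace ℝ (Fin n) → ℝ → EuclideanSpace ℝ (Fin n))
    (hLsmooth : ∀ t : ℝ, ContDiff ℝ 1 (fun p : EuclideanSpace ℝ (Fin n) × EuclideanSpace ℝ (Fin n) => L p.1 p.2 t))
    (hLx : ∀ x v t, HasGradientAt (fun y => L y v t) (Lx x v t) x)
    (hLv : ∀ x v t, HasGradientAt (fun w => L x w t) (Lv x v t) v)
    (η : ℝ) (hη : 0 < η)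
    (Φ : ℝ → EuclideanSpace ℝ (Fin n) → EuclideanSpace ℝ (Fin n))
    (Φθ : ℝ → EuclideanSpace ℝ (Fin n) → EuclideanSpace ℝ (Fin n))
    (hΦ0 : ∀ x, Φ 0 x = x)
    (hΦθ : ∀ θ x, HasDerivAt (fun θ' => Φ θ' x) (Φθ θ x) θ)
    (sd : ℝ → ℝ) (hσ : ∀ t ∈ Tlow T, HasNablaDerivAt T (tsSigma T) t (sd t))
    (u : ℝ → EuclideanSpace ℝ (Fin n)) (uΔ : ℝ → EuclideanSpace ℝ (Fin n))
    (hu : ∀ t ∈ Tup T, HasDeltaDerivAt T u t (uΔ t))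
    -- Euler--Lagrange equation (EL^{∇∘Δ}_diff)
    (hEL : ∀ t ∈ Tup T ∩ Tlow T,
      HasNablaDerivAt T (fun s => Lv (u s) (uΔ s) s) t (sd t • Lx (u t) (uΔ t) t))
    -- Δ-derivative of θ ↦ Φ(θ, u(·)) in the t-variable
    (ΦuΔ : ℝ → ℝ → EuclideanSpace ℝ (Fin n))
    (hΦuΔ : ∀ θ ∈ Set.Icc (-η) η, ∀ t ∈ Tup T,
      HasDeltaDerivAt T (fun s => Φ θ (u s)) t (ΦuΔ θ t))
    -- invariance of the Lagrangian under the action of Φ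
    (hinv : ∀ t ∈ Tup T ∩ Tlow T, ∀ θ ∈ Set.Icc (-η) η,
      L (Φ θ (u t)) (ΦuΔ θ t) t = L (u t) (uΔ t) t)
    -- commutation of Δ-differentiation in t and differentiation in θ at θ = 0
    (ΨΔ : ℝ → EuclideanSpace ℝ (Fin n))
    (hΨΔ : ∀ t ∈ Tup T, HasDeltaDerivAt T (fun s => Φθ 0 (u s)) t (ΨΔ t))
    (hcomm : ∀ t ∈ Tup T ∩ Tlow T, HasDerivAt (fun θ => ΦuΔ θ t) (ΨΔ t) 0) :
    ∃ c : ℝ, ∀ t ∈ Tup T, ⟪Lv (u t) (uΔ t) t, Φθ 0 (u (tsSigma T t))⟫ = c := by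
  have hab : sInf T < sSup T := by
    obtain ⟨x, hx, y, hy, -, -, hxy, -⟩ := hcard
    rcases hxy.lt_or_gt with h | h
    · exact (csInf_le hbd.bddBelow hx).trans_lt (h.trans_le (le_csSup hbd.bddAbove hy))
    · exact (csInf_le hbd.bddBelow hy).trans_lt (h.trans_le (le_csSup hbd.bddAbove hx))
  have hvariation : ∀ t ∈ Tup T ∩ Tlow T,
      ⟪Lx (u t) (uΔ t) t, Φθ 0 (u t)⟫ + ⟪Lv (u t) (uΔ t) t, ΨΔ t⟫ = 0 := by
    intro t ht
    have hF := neBot_nhdsWithin_diff_tsSigma hbd hab ht.1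
    have hu' : HasDeltaDerivAt T (fun s => Φ 0 (u s)) t (uΔ t) := by
      simpa only [hΦ0] using hu t ht.1
    have hΦuΔ₀ : ΦuΔ 0 t = uΔ t := tendsto_nhds_unique (hΦuΔ 0 ⟨neg_nonpos.2 hη.le, hη.le⟩ t ht.1) hu'
    exact inner_gradient_add_inner_gradient_eq_zero (L := fun x w => L x w t)
      ((hLsmooth t).differentiable one_ne_zero _)
      (hLx _ _ t) (hLv _ _ t) (hΦθ 0 (u t)) (hcomm t ht) (hΦ0 _) hΦuΔ₀
      (eventually_of_mem (Icc_mem_nhds (neg_neg_of_pos hη) hη) (hinv t ht))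
  have hconst : ∀ t ∈ Tup T ∩ Tlow T,
      HasNablaDerivAt T (fun s => ⟪Lv (u s) (uΔ s) s, Φθ 0 (u (tsSigma T s))⟫) t 0 := by
    intro t ht
    convert hasNablaDerivAt_inner_comp_tsSigma hne hbd hcl (hEL t ht) (hΨΔ t ht.1) (hσ t ht.2)
      ht.1.1 using 1
    rw [real_inner_smul_left, ← mul_add, hvariation t ht, mul_zero]
  exact ⟨_, fun t ht => eq_of_hasNablaDerivAt_zero hne hbd hcl ht.1 fun s hs hσs hst =>
    hconst s ⟨⟨hs, hst.trans ht.2⟩, hs, hσs⟩⟩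

/-- Noether-type theorem on time scales: assume `σ` is ∇-differentiable on `T_κ`
(with derivative `sd`), `L` is continuous and C¹ in its two first variables with partial
gradients `Lx`, `Lv`, `Φ` is a C² one-parameter family of transformations with `Φ(0,·) = id`
and `∂Φ/∂θ = Φθ`, `u` is Δ-differentiable on `T^κ` (with derivative `uΔ` and rd-continuous
Δ-derivative), `u` solves the `∇∘Δ`-differential Euler–Lagrange equation on `T^κ_κ`, the
Lagrangian is invariant under `Φ` along `u` (where `ΦuΔ θ` is the Δ-derivative of
`Φ(θ, u(·))` and Δ-differentiation in `t` commutes with differentiation in `θ` at `θ = 0`,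
`ΨΔ` being the Δ-derivative of `Φθ(0, u(·))`). Then there exists `c ∈ ℝ` with
`∂L/∂v(u(t), u^Δ(t), t) ⬝ ∂Φ/∂θ(0, u(σ(t))) = c` for every `t ∈ T^κ`. -/
theorem stmt_18 (T : Set ℝ) (hne : T.Nonempty) (hbd : Bornology.IsBounded T) (hcl : IsClosed T)
    (hcard : ∃ x ∈ T, ∃ y ∈ T, ∃ z ∈ T, x ≠ y ∧ x ≠ z ∧ y ≠ z)
    (n : ℕ)
    (L : EuclideanSpace ℝ (Fin n) → EuclideanSpace ℝ (Fin n) → ℝ → ℝ)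
    (Lx Lv : EuclideanSpace ℝ (Fin n) → EuclideanSpace ℝ (Fin n) → ℝ → EuclideanSpace ℝ (Fin n))
    (hLsmooth : ∀ t : ℝ, ContDiff ℝ 1 (fun p : EuclideanSpace ℝ (Fin n) × EuclideanSpace ℝ (Fin n) => L p.1 p.2 t))
    (hLx : ∀ x v t, HasGradientAt (fun y => L y v t) (Lx x v t) x)
    (hLv : ∀ x v t, HasGradientAt (fun w => L x w t) (Lv x v t) v)
    (η : ℝ) (hη : 0 < η)
    (Φ : ℝ → EuclideanSpace ℝ (Fin n) → EuclideanSpace ℝ (Fin n))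
    (Φθ : ℝ → EuclideanSpace ℝ (Fin n) → EuclideanSpace ℝ (Fin n))
    (hΦsmooth : ContDiff ℝ 2 (fun p : ℝ × EuclideanSpace ℝ (Fin n) => Φ p.1 p.2))
    (hΦ0 : ∀ x, Φ 0 x = x)
    (hΦθ : ∀ θ x, HasDerivAt (fun θ' => Φ θ' x) (Φθ θ x) θ)
    (sd : ℝ → ℝ) (hσ : ∀ t ∈ Tlow T, HasNablaDerivAt T (tsSigma T) t (sd t))
    (u : ℝ → EuclideanSpace ℝ (Fin n)) (uΔ : ℝ → EuclideanSpace ℝ (Fin n))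
    (hu : ∀ t ∈ Tup T, HasDeltaDerivAt T u t (uΔ t))
    (huΔrd : ∀ t ∈ Tup T, tsSigma T t = t → ContinuousWithinAt uΔ T t)
    (huΔld : ∀ t ∈ Tup T, tsRho T t = t →
      ∃ l : EuclideanSpace ℝ (Fin n), Filter.Tendsto uΔ (nhdsWithin t (T ∩ Set.Iio t)) (nhds l))
    -- Euler--Lagrange equation (EL^{∇∘Δ}_diff)
    (hEL : ∀ t ∈ Tup T ∩ Tlow T,
      HasNablaDerivAt T (fun s => Lv (u s) (uΔ s) s) t (sd t • Lx (u t) (uΔ t) t))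
    -- Δ-derivative of θ ↦ Φ(θ, u(·)) in the t-variable
    (ΦuΔ : ℝ → ℝ → EuclideanSpace ℝ (Fin n))
    (hΦuΔ : ∀ θ ∈ Set.Icc (-η) η, ∀ t ∈ Tup T,
      HasDeltaDerivAt T (fun s => Φ θ (u s)) t (ΦuΔ θ t))
    -- invariance of the Lagrangian under the action of Φ
    (hinv : ∀ t ∈ Tup T ∩ Tlow T, ∀ θ ∈ Set.Icc (-η) η,
      L (Φ θ (u t)) (ΦuΔ θ t) t = L (u t) (uΔ t) t)
    -- commutation of Δ-differentiation in t and differentiation in θ at θ = 0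
    (ΨΔ : ℝ → EuclideanSpace ℝ (Fin n))
    (hΨΔ : ∀ t ∈ Tup T, HasDeltaDerivAt T (fun s => Φθ 0 (u s)) t (ΨΔ t))
    (hcomm : ∀ t ∈ Tup T ∩ Tlow T, HasDerivAt (fun θ => ΦuΔ θ t) (ΨΔ t) 0) :
    ∃ c : ℝ, ∀ t ∈ Tup T, ⟪Lv (u t) (uΔ t) t, Φθ 0 (u (tsSigma T t))⟫ = c :=
  stmt_18_general T hne hbd hcl hcard n L Lx Lv hLsmooth hLx hLv η hη Φ Φθ hΦ0 hΦθ sd hσ u uΔ hu hEL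
    ΦuΔ hΦuΔ hinv ΨΔ hΨΔ hcomm
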